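/- Let p ≥ 2 be an integer and β > β_0 > β*(p), and let X = (X_1,…,X_n) be distributed according to the p-tensor Curie-Weiss model P_{β_0,p} on {−1,1}^n. Then lim_{n→∞} (1/n) log P_{β_0,p}(η_p(X̄_n) > β) = sup_{x ∈ η_p^{−1}((β,∞))} H_{β_0,p}(x) − sup_{x∈[−1,1]} H_{β_0,p}(x), where η_p^{−1}((β,∞)) = {t ∈ [−1,1] : η_p(t) > β}. (Note η_p(X̄_n) is the maximum pseudolikelihood estimator of the parameter.) -/

import Mathlib

open Real Set Filter

/-- `I(x) = ½[(1+x)log(1+x) + (1−x)log(1−x)]` (with `Real.log 0 = 0`). -/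
noncomputable def bahI (x : ℝ) : ℝ :=
  ((1 + x) * Real.log (1 + x) + (1 - x) * Real.log (1 - x)) / 2

/-- `H_{β,p}(x) = β xᵖ − I(x)`. -/
noncomputable def bahH (β : ℝ) (p : ℕ) (x : ℝ) : ℝ := β * x ^ p - bahI x

/-- `β*(p) = sup {β ≥ 0 : sup_{x∈[−1,1]} H_{β,p}(x) = 0}`. -/
noncomputable def betaStar (p : ℕ) : ℝ :=
  sSup {β : ℝ | 0 ≤ β ∧ sSup (bahH β p '' Set.Icc (-1 : ℝ) 1) = 0}

/-- inverse hyperbolic tangent. -/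
noncomputable def arctanh (x : ℝ) : ℝ := Real.log ((1 + x) / (1 - x)) / 2

/-- `η_p(t) = p⁻¹ t^{1−p} arctanh t` for `t ≠ 0`, and `η_p(0) = 0`. -/
noncomputable def etaFn (p : ℕ) (t : ℝ) : ℝ :=
  if t = 0 then 0 else (p : ℝ)⁻¹ * t ^ (1 - (p : ℤ)) * arctanh t

/-- The spin value of a Boolean coordinate: `true ↦ 1`, `false ↦ −1`. -/
noncomputable def spin (b : Bool) : ℝ := if b then 1 else -1

/-- The average magnetization `X̄ = n⁻¹ Σᵢ Xᵢ` of a configuration in `{−1,1}ⁿ`. -/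
noncomputable def mag {n : ℕ} (σ : Fin n → Bool) : ℝ := (∑ i, spin (σ i)) / n

/-- The unnormalized Curie–Weiss weight `exp(β n^{1−p} (Σᵢ xᵢ)ᵖ)` of a configuration. -/
noncomputable def cwWeight (β : ℝ) (p n : ℕ) (σ : Fin n → Bool) : ℝ :=
  Real.exp (β * (n : ℝ) ^ (1 - (p : ℤ)) * (∑ i, spin (σ i)) ^ p)

/-- The probability of the event `E` under the `p`-tensor Curie–Weiss model `P_{β,p}`
on `{−1,1}ⁿ` (the normalizations `2ⁿ Z_n(β,p)` cancel in this ratio). -/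
noncomputable def cwProb (β : ℝ) (p n : ℕ) (E : Set (Fin n → Bool)) : ℝ :=
  (∑ σ : Fin n → Bool, E.indicator (cwWeight β p n) σ)
    / ∑ σ : Fin n → Bool, cwWeight β p n σ

/-! Grouping configurations by their number `k` of up spins turns `P_{β,p}(X̄_n ∈ V)` into a
ratio of sums of at most `n + 1` terms `C(n,k) exp(n β m^p)` with `m = (2k - n)/n`. Comparing
`C(n,k) k^k (n-k)^(n-k)` with the largest term of the binomial expansion of `(k + (n - k))^n`
gives `C(n,k) = exp(n (log 2 - I(m)))` up to a factor `n + 1`, so each term is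
`exp(n (log 2 + H_{β,p}(m)))` up to that factor, and each sum grows like
`exp(n (log 2 + sup H_{β,p}))`, the supremum taken over the magnetizations it ranges over
(Laplace's principle). The lower bound needs lattice points `m` close to a near-maximiser,
which exist when `V` is open; `{η_p > β}` is open once `β ≥ 0`, since `η_p` is continuous off
`{0, ±1}`, where it vanishes. -/

open Topology

lemma continuous_bahI : Continuous bahI := by
  have h₁ : Continuous fun x : ℝ => (1 + x) * log (1 + x) :=
    continuous_mul_log.comp (continuous_const.add continuous_id)
  have h₂ : Continuous fun x : ℝ => (1 - x) * log (1 - x) :=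
    continuous_mul_log.comp (continuous_const.sub continuous_id)
  exact (h₁.add h₂).div_const 2

lemma continuous_bahH (β : ℝ) (p : ℕ) : Continuous (bahH β p) :=
  (continuous_const.mul (continuous_pow p)).sub continuous_bahI

lemma bddAbove_image_bahH (β : ℝ) (p : ℕ) {A : Set ℝ} (hA : A ⊆ Icc (-1) 1) :
    BddAbove (bahH β p '' A) :=
  (isCompact_Icc.bddAbove_image (continuous_bahH β p).continuousOn).mono (image_mono hA)

lemma betaStar_nonneg (p : ℕ) : 0 ≤ betaStar p :=
  Real.sSup_nonneg fun _ hβ => hβ.1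

lemma arctanh_eq_artanh {x : ℝ} (hx : x ∈ Icc (-1 : ℝ) 1) : arctanh x = artanh x := by
  rw [artanh_eq_half_log hx, arctanh]
  ring

lemma continuousAt_arctanh {t : ℝ} (h₁ : t ≠ 1) (h₂ : t ≠ -1) : ContinuousAt arctanh t := by
  have hden : 1 - t ≠ 0 := sub_ne_zero.2 h₁.symm
  have hnum : 1 + t ≠ 0 := fun h => h₂ (by linarith)
  have hquot : ContinuousAt (fun y : ℝ => (1 + y) / (1 - y)) t :=
    (continuousAt_const.add continuousAt_id).div (continuousAt_const.sub continuousAt_id) hden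
  exact (hquot.log (div_ne_zero hnum hden)).div_const 2

lemma continuousAt_etaFn (p : ℕ) {t : ℝ} (h₀ : t ≠ 0) (h₁ : t ≠ 1) (h₂ : t ≠ -1) :
    ContinuousAt (etaFn p) t := by
  have hev : (fun y => (p : ℝ)⁻¹ * y ^ (1 - (p : ℤ)) * arctanh y) =ᶠ[𝓝 t] etaFn p := by
    filter_upwards [isOpen_ne.mem_nhds h₀] with y hy
    rw [etaFn, if_neg hy]
  exact ((continuousAt_const.mul (continuousAt_zpow₀ t _ (Or.inl h₀))).mul
    (continuousAt_arctanh h₁ h₂)).congr hev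

/-- `η_p` vanishes at `0` and, through the junk value `log 0 = 0`, at `±1`. -/
lemma isOpen_setOf_lt_etaFn (p : ℕ) {β : ℝ} (hβ : 0 ≤ β) : IsOpen {t | β < etaFn p t} := by
  refine isOpen_iff_mem_nhds.2 fun t ht => ?_
  have hη : etaFn p t ≠ 0 := (hβ.trans_lt ht).ne'
  have h₀ : t ≠ 0 := by rintro rfl; simp [etaFn] at hη
  have h₁ : t ≠ 1 := by rintro rfl; simp [etaFn, arctanh] at hη
  have h₂ : t ≠ -1 := by rintro rfl; norm_num [etaFn, arctanh] at hη
  exact (continuousAt_etaFn p h₀ h₁ h₂).eventually (lt_mem_nhds ht)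

lemma exists_lt_etaFn {p : ℕ} (hp : p ≠ 0) (β : ℝ) : ∃ t ∈ Icc (-1 : ℝ) 1, β < etaFn p t := by
  set c : ℝ := p * (|β| + 1) with hc_def
  have hc : 0 < c := by positivity
  set t := tanh c
  have ht₀ : 0 < t := by
    by_contra! h
    linarith [artanh_nonpos h, artanh_tanh c]
  have ht₁ : t < 1 := tanh_lt_one c
  have ht : t ∈ Icc (-1 : ℝ) 1 := ⟨by linarith, ht₁.le⟩
  refine ⟨t, ht, ?_⟩
  have hpow : 1 ≤ t ^ (1 - (p : ℤ)) := one_le_zpow_of_nonpos₀ ht₀ ht₁.le (by omega)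
  rw [etaFn, if_neg ht₀.ne', arctanh_eq_artanh ht, artanh_tanh]
  calc β < |β| + 1 := by linarith [le_abs_self β]
    _ = (p : ℝ)⁻¹ * 1 * c := by rw [hc_def]; field_simp
    _ ≤ (p : ℝ)⁻¹ * t ^ (1 - (p : ℤ)) * c := by gcongr

section BinomialEntropy

/-- The `j`-th term of the binomial expansion of `n ^ n = (k + (n - k)) ^ n`. -/
def binomTerm (n k j : ℕ) : ℕ := n.choose j * k ^ j * (n - k) ^ (n - j)

variable {n k j : ℕ}

lemma sum_binomTerm (hk : k ≤ n) : ∑ j ∈ Finset.range (n + 1), binomTerm n k j = n ^ n := by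
  have h := add_pow k (n - k) n
  rw [Nat.add_sub_cancel' hk] at h
  rw [h]
  exact Finset.sum_congr rfl fun j _ => by rw [binomTerm, Nat.cast_id]; ring

lemma binomTerm_eq_mul (hj : j < n) :
    binomTerm n k j = n.choose j * k ^ j * (n - k) ^ (n - (j + 1)) * (n - k) := by
  rw [binomTerm, show n - j = n - (j + 1) + 1 by omega, pow_succ]
  ring

lemma succ_mul_binomTerm_succ :
    (j + 1) * binomTerm n k (j + 1)
      = n.choose j * k ^ j * (n - k) ^ (n - (j + 1)) * ((n - j) * k) := by
  rw [binomTerm, ← mul_assoc, ← mul_assoc, mul_comm (j + 1), Nat.choose_succ_right_eq]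
  ring

lemma binomTerm_le_binomTerm_succ (hjk : j < k) (hk : k ≤ n) :
    binomTerm n k j ≤ binomTerm n k (j + 1) := by
  refine Nat.le_of_mul_le_mul_left ?_ j.succ_pos
  calc (j + 1) * binomTerm n k j
      = n.choose j * k ^ j * (n - k) ^ (n - (j + 1)) * ((n - k) * (j + 1)) := by
        rw [binomTerm_eq_mul (by omega)]; ring
    _ ≤ n.choose j * k ^ j * (n - k) ^ (n - (j + 1)) * ((n - j) * k) :=
        Nat.mul_le_mul_left _ (Nat.mul_le_mul (by omega) (by omega))
    _ = (j + 1) * binomTerm n k (j + 1) := succ_mul_binomTerm_succ.symm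

lemma binomTerm_succ_le_binomTerm (hkj : k ≤ j) (hj : j < n) :
    binomTerm n k (j + 1) ≤ binomTerm n k j := by
  refine Nat.le_of_mul_le_mul_left ?_ j.succ_pos
  calc (j + 1) * binomTerm n k (j + 1)
      = n.choose j * k ^ j * (n - k) ^ (n - (j + 1)) * ((n - j) * k) := succ_mul_binomTerm_succ
    _ ≤ n.choose j * k ^ j * (n - k) ^ (n - (j + 1)) * ((n - k) * (j + 1)) :=
        Nat.mul_le_mul_left _ (Nat.mul_le_mul (by omega) (by omega))
    _ = (j + 1) * binomTerm n k j := by rw [binomTerm_eq_mul hj]; ring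

lemma binomTerm_le_binomTerm_self (hk : k ≤ n) (hj : j ≤ n) :
    binomTerm n k j ≤ binomTerm n k k := by
  rcases le_total j k with hjk | hkj
  · exact monotoneOn_of_le_add_one (f := binomTerm n k) ordConnected_Iic
      (fun a _ _ ha => binomTerm_le_binomTerm_succ (Nat.lt_of_succ_le ha) hk)
      hjk (mem_Iic.2 le_rfl) hjk
  · exact antitoneOn_of_add_one_le (f := binomTerm n k) ordConnected_Icc
      (fun a _ ha ha' => binomTerm_succ_le_binomTerm ha.1 (Nat.lt_of_succ_le ha'.2))
      ⟨le_rfl, hk⟩ ⟨hkj, hj⟩ hkj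

lemma choose_mul_pow_mul_pow_le (hk : k ≤ n) :
    n.choose k * k ^ k * (n - k) ^ (n - k) ≤ n ^ n := by
  rw [← sum_binomTerm hk]
  exact Finset.single_le_sum (f := binomTerm n k) (fun _ _ => Nat.zero_le _)
    (Finset.mem_range.2 (Nat.lt_succ_of_le hk))

lemma pow_le_succ_mul_choose_mul_pow_mul_pow (hk : k ≤ n) :
    n ^ n ≤ (n + 1) * (n.choose k * k ^ k * (n - k) ^ (n - k)) := by
  rw [← sum_binomTerm hk]
  calc ∑ j ∈ Finset.range (n + 1), binomTerm n k j
      ≤ ∑ _j ∈ Finset.range (n + 1), binomTerm n k k :=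
        Finset.sum_le_sum fun j hj =>
          binomTerm_le_binomTerm_self hk (Nat.le_of_lt_succ (Finset.mem_range.1 hj))
    _ = (n + 1) * (n.choose k * k ^ k * (n - k) ^ (n - k)) := by simp [binomTerm]

/-- The magnetization `(2k - n)/n` of a configuration of `n` spins with `k` of them up. -/
noncomputable def latticePt (n k : ℕ) : ℝ := (2 * k - n) / n

lemma latticePt_mem_Icc (hk : k ≤ n) : latticePt n k ∈ Icc (-1 : ℝ) 1 := by
  rcases Nat.eq_zero_or_pos n with rfl | hn
  · simp [latticePt]
  have hn' : (0 : ℝ) < n := Nat.cast_pos.2 hn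
  have hk' : (k : ℝ) ≤ n := Nat.cast_le.2 hk
  constructor
  · rw [latticePt, le_div_iff₀ hn']; linarith [k.cast_nonneg (α := ℝ)]
  · rw [latticePt, div_le_iff₀ hn']; linarith

lemma natCast_mul_log_two_mul_div (a : ℕ) (hn : n ≠ 0) :
    (a : ℝ) * log (2 * a / n) = a * log a + a * log 2 - a * log n := by
  rcases eq_or_ne a 0 with rfl | ha
  · simp
  rw [log_div (by positivity) (by positivity), log_mul two_ne_zero (by positivity)]
  ring

lemma natCast_mul_bahI_latticePt (hn : n ≠ 0) (hk : k ≤ n) :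
    (n : ℝ) * bahI (latticePt n k)
      = k * log k + (n - k : ℕ) * log (n - k : ℕ) + n * log 2 - n * log n := by
  have hn' : (n : ℝ) ≠ 0 := Nat.cast_ne_zero.2 hn
  have h₁ : 1 + latticePt n k = 2 * k / n := by rw [latticePt]; field_simp; ring
  have h₂ : 1 - latticePt n k = 2 * (n - k : ℕ) / n := by
    rw [latticePt, Nat.cast_sub hk]; field_simp; ring
  rw [bahI, h₁, h₂, mul_div_assoc', mul_add, ← mul_assoc, ← mul_assoc, mul_div_cancel₀ _ hn',
    mul_div_cancel₀ _ hn', mul_assoc, mul_assoc, natCast_mul_log_two_mul_div k hn,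
    natCast_mul_log_two_mul_div (n - k) hn, Nat.cast_sub hk]
  ring

lemma exp_natCast_mul_log (a : ℕ) : exp (a * log a) = (a : ℝ) ^ a := by
  rcases eq_or_ne a 0 with rfl | ha
  · simp
  rw [← log_pow, exp_log (by positivity)]

lemma exp_entropy_mul_pow_mul_pow (hn : n ≠ 0) (hk : k ≤ n) :
    exp (n * (log 2 - bahI (latticePt n k))) * ((k : ℝ) ^ k * ((n - k : ℕ) : ℝ) ^ (n - k))
      = (n : ℝ) ^ n := by
  rw [mul_sub, natCast_mul_bahI_latticePt hn hk, ← exp_natCast_mul_log k,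
    ← exp_natCast_mul_log (n - k), ← exp_natCast_mul_log n, ← exp_add, ← exp_add]
  congr 1
  ring

lemma pow_mul_pow_pos (n k : ℕ) : 0 < (k : ℝ) ^ k * ((n - k : ℕ) : ℝ) ^ (n - k) := by
  rw [← exp_natCast_mul_log, ← exp_natCast_mul_log]
  positivity

lemma choose_le_exp_entropy (hn : n ≠ 0) (hk : k ≤ n) :
    (n.choose k : ℝ) ≤ exp (n * (log 2 - bahI (latticePt n k))) := by
  refine le_of_mul_le_mul_right ?_ (pow_mul_pow_pos n k)
  rw [exp_entropy_mul_pow_mul_pow hn hk, ← mul_assoc]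
  exact_mod_cast choose_mul_pow_mul_pow_le hk

lemma exp_entropy_div_le_choose (hn : n ≠ 0) (hk : k ≤ n) :
    exp (n * (log 2 - bahI (latticePt n k))) / (n + 1) ≤ n.choose k := by
  rw [div_le_iff₀ (by positivity)]
  refine le_of_mul_le_mul_right ?_ (pow_mul_pow_pos n k)
  calc exp (n * (log 2 - bahI (latticePt n k))) * ((k : ℝ) ^ k * ((n - k : ℕ) : ℝ) ^ (n - k))
      = (n : ℝ) ^ n := exp_entropy_mul_pow_mul_pow hn hk
    _ ≤ (n + 1) * (n.choose k * k ^ k * ((n - k : ℕ) : ℝ) ^ (n - k)) := by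
      exact_mod_cast pow_le_succ_mul_choose_mul_pow_mul_pow hk
    _ = n.choose k * (n + 1) * ((k : ℝ) ^ k * ((n - k : ℕ) : ℝ) ^ (n - k)) := by ring

end BinomialEntropy

section Configurations

variable (α : Type*) [Fintype α] [DecidableEq α]

def boolFunEquivFinset : (α → Bool) ≃ Finset α where
  toFun σ := Finset.univ.filter fun i => σ i = true
  invFun s i := decide (i ∈ s)
  left_inv σ := by ext i; simp
  right_inv s := by ext i; simp

variable {α}

lemma sum_spin_eq (σ : α → Bool) :
    ∑ i, spin (σ i) = 2 * ((boolFunEquivFinset α σ).card : ℝ) - Fintype.card α := by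
  have h : ∀ b, spin b = 2 * (if b = true then 1 else 0) - 1 := by
    intro b; cases b <;> norm_num [spin]
  rw [Finset.sum_congr rfl fun i _ => h (σ i), Finset.sum_sub_distrib, ← Finset.mul_sum,
    Finset.sum_boole]
  simp [boolFunEquivFinset]

lemma sum_boolFun_eq_sum_choose (F : ℕ → ℝ) :
    ∑ σ : α → Bool, F (boolFunEquivFinset α σ).card
      = ∑ k ∈ Finset.range (Fintype.card α + 1), (Fintype.card α).choose k * F k := by
  rw [Fintype.sum_equiv (boolFunEquivFinset α) _ (fun s => F s.card) (fun _ => rfl),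
    ← Finset.powerset_univ, Finset.sum_powerset_apply_card]
  simp

end Configurations

section CurieWeiss

variable (β : ℝ) (p : ℕ)

lemma mag_eq_latticePt {n : ℕ} (σ : Fin n → Bool) :
    mag σ = latticePt n (boolFunEquivFinset (Fin n) σ).card := by
  rw [mag, sum_spin_eq, Fintype.card_fin, latticePt]

lemma cwWeight_eq_exp_mag {n : ℕ} (hn : n ≠ 0) (σ : Fin n → Bool) :
    cwWeight β p n σ = exp (n * (β * mag σ ^ p)) := by
  rw [cwWeight, mag, div_pow, zpow_sub₀ (Nat.cast_ne_zero.2 hn), zpow_one, zpow_natCast]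
  congr 1
  ring

/-- The total Curie–Weiss weight of the configurations with `k` up spins. -/
noncomputable def levelTerm (n k : ℕ) : ℝ := n.choose k * exp (n * (β * latticePt n k ^ p))

open Classical in
noncomputable def levelSum (n : ℕ) (V : Set ℝ) : ℝ :=
  ∑ k ∈ (Finset.range (n + 1)).filter (fun k => latticePt n k ∈ V), levelTerm β p n k

variable {n k : ℕ}

lemma sum_indicator_cwWeight (hn : n ≠ 0) (V : Set ℝ) :
    ∑ σ : Fin n → Bool, {σ | mag σ ∈ V}.indicator (cwWeight β p n) σ = levelSum β p n V := by
  classical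
  set F : ℕ → ℝ := fun k => if latticePt n k ∈ V then exp (n * (β * latticePt n k ^ p)) else 0
  have h : ∀ σ : Fin n → Bool,
      {σ | mag σ ∈ V}.indicator (cwWeight β p n) σ = F (boolFunEquivFinset (Fin n) σ).card := by
    intro σ
    simp only [F, indicator_apply, mem_ofPred_eq, cwWeight_eq_exp_mag β p hn, mag_eq_latticePt]
  rw [Fintype.sum_congr _ _ h, sum_boolFun_eq_sum_choose (α := Fin n) F, Fintype.card_fin,
    levelSum, Finset.sum_filter]
  simp only [F, levelTerm, mul_ite, mul_zero]

lemma cwProb_eq_levelSum_div (hn : n ≠ 0) (V : Set ℝ) :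
    cwProb β p n {σ | mag σ ∈ V} = levelSum β p n V / levelSum β p n univ := by
  have huniv := sum_indicator_cwWeight β p hn univ
  simp only [mem_univ, ofPred_true, indicator_univ] at huniv
  rw [cwProb, sum_indicator_cwWeight β p hn, huniv]

lemma levelTerm_le (hn : n ≠ 0) (hk : k ≤ n) :
    levelTerm β p n k ≤ exp (n * (log 2 + bahH β p (latticePt n k))) := by
  calc levelTerm β p n k
      ≤ exp (n * (log 2 - bahI (latticePt n k))) * exp (n * (β * latticePt n k ^ p)) :=
        mul_le_mul_of_nonneg_right (choose_le_exp_entropy hn hk) (exp_pos _).le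
    _ = exp (n * (log 2 + bahH β p (latticePt n k))) := by
        rw [← exp_add, bahH]
        congr 1
        ring

lemma exp_div_le_levelTerm (hn : n ≠ 0) (hk : k ≤ n) :
    exp (n * (log 2 + bahH β p (latticePt n k))) / (n + 1) ≤ levelTerm β p n k := by
  calc exp (n * (log 2 + bahH β p (latticePt n k))) / (n + 1)
      = exp (n * (log 2 - bahI (latticePt n k))) / (n + 1)
          * exp (n * (β * latticePt n k ^ p)) := by
        rw [div_mul_eq_mul_div, ← exp_add, bahH]
        congr 2
        ring
    _ ≤ levelTerm β p n k :=
        mul_le_mul_of_nonneg_right (exp_entropy_div_le_choose hn hk) (exp_pos _).le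

end CurieWeiss

lemma tendsto_log_add_one_div : Tendsto (fun n : ℕ => log (n + 1) / n) atTop (𝓝 0) := by
  have h := (tendsto_pow_log_div_mul_add_atTop 1 (-1) 1 one_ne_zero).comp
    (tendsto_atTop_add_const_right _ 1 tendsto_natCast_atTop_atTop)
  refine h.congr fun n => ?_
  simp

lemma tendsto_log_div_of_exp_bounds {b : ℕ → ℝ} {M : ℝ}
    (hup : ∀ᶠ n : ℕ in atTop, b n ≤ (n + 1) * exp (n * M))
    (hlow : ∀ ε > 0, ∀ᶠ n : ℕ in atTop, exp (n * (M - ε)) / (n + 1) ≤ b n) :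
    Tendsto (fun n => log (b n) / n) atTop (𝓝 M) := by
  rw [tendsto_order]
  refine ⟨fun a ha => ?_, fun c hc => ?_⟩
  · have hε : 0 < (M - a) / 2 := by linarith
    filter_upwards [hlow _ hε, tendsto_log_add_one_div.eventually (gt_mem_nhds hε),
      eventually_gt_atTop 0] with n hb hlog hn
    have hn' : (0 : ℝ) < n := Nat.cast_pos.2 hn
    have hlog_b := log_le_log (by positivity) hb
    rw [log_div (exp_ne_zero _) (by positivity), log_exp] at hlog_b
    rw [div_lt_iff₀ hn'] at hlog
    rw [lt_div_iff₀ hn']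
    nlinarith
  · filter_upwards [hup, hlow 1 one_pos,
      tendsto_log_add_one_div.eventually (gt_mem_nhds (sub_pos.2 hc)),
      eventually_gt_atTop 0] with n hb hb_pos hlog hn
    have hn' : (0 : ℝ) < n := Nat.cast_pos.2 hn
    have hlog_b := log_le_log ((div_pos (exp_pos _) (by positivity)).trans_le hb_pos) hb
    rw [log_mul (by positivity) (exp_ne_zero _), log_exp] at hlog_b
    rw [div_lt_iff₀ hn'] at hlog
    rw [div_lt_iff₀ hn']
    nlinarith

lemma eventually_exists_latticePt_mem {x : ℝ} (hx : x ∈ Icc (-1 : ℝ) 1) {U : Set ℝ}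
    (hU : U ∈ 𝓝 x) : ∀ᶠ n in atTop, ∃ k ≤ n, latticePt n k ∈ U := by
  set a := (1 + x) / 2 with ha
  have ha₀ : 0 ≤ a := by linarith [hx.1]
  have ha₁ : a ≤ 1 := by linarith [hx.2]
  have hlim : Tendsto (fun n : ℕ => latticePt n ⌊a * n⌋₊) atTop (𝓝 x) := by
    have h := (((tendsto_nat_floor_mul_div_atTop ha₀).comp
      tendsto_natCast_atTop_atTop).const_mul 2).sub_const 1
    rw [show 2 * a - 1 = x by ring] at h
    refine h.congr' ?_
    filter_upwards [eventually_ne_atTop 0] with n hn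
    simp only [Function.comp_apply, latticePt]
    field_simp
  filter_upwards [hlim hU] with n hn
  exact ⟨_, Nat.floor_le_of_le (by nlinarith [n.cast_nonneg (α := ℝ)]), hn⟩

section Laplace

variable (β : ℝ) (p : ℕ) {n : ℕ} {V : Set ℝ}

lemma levelSum_le (hn : n ≠ 0) :
    levelSum β p n V ≤ (n + 1) * exp (n * (log 2 + sSup (bahH β p '' (Icc (-1) 1 ∩ V)))) := by
  classical
  set S := sSup (bahH β p '' (Icc (-1) 1 ∩ V))
  have hterm : ∀ k ∈ (Finset.range (n + 1)).filter (fun k => latticePt n k ∈ V),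
      levelTerm β p n k ≤ exp (n * (log 2 + S)) := by
    intro k hk
    obtain ⟨hkn, hkV⟩ := Finset.mem_filter.1 hk
    have hkn : k ≤ n := Nat.le_of_lt_succ (Finset.mem_range.1 hkn)
    refine (levelTerm_le β p hn hkn).trans ?_
    gcongr
    exact le_csSup (bddAbove_image_bahH β p inter_subset_left)
      ⟨_, ⟨latticePt_mem_Icc hkn, hkV⟩, rfl⟩
  calc levelSum β p n V ≤ _ := Finset.sum_le_card_nsmul _ _ _ hterm
    _ ≤ (n + 1) * exp (n * (log 2 + S)) := by
      rw [nsmul_eq_mul]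
      gcongr
      exact_mod_cast (Finset.card_filter_le _ _).trans (Finset.card_range _).le

lemma eventually_exp_div_le_levelSum (hV : IsOpen V) (hne : (Icc (-1 : ℝ) 1 ∩ V).Nonempty)
    {ε : ℝ} (hε : 0 < ε) :
    ∀ᶠ n : ℕ in atTop, exp (n * (log 2 + sSup (bahH β p '' (Icc (-1) 1 ∩ V)) - ε)) / (n + 1)
      ≤ levelSum β p n V := by
  classical
  set S := sSup (bahH β p '' (Icc (-1) 1 ∩ V))
  obtain ⟨_, ⟨x, hx, rfl⟩, hxS⟩ := exists_lt_of_lt_csSup (hne.image _) (sub_lt_self S hε)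
  have hU : V ∩ {y | S - ε < bahH β p y} ∈ 𝓝 x :=
    inter_mem (hV.mem_nhds hx.2)
      ((continuous_bahH β p).continuousAt.eventually (lt_mem_nhds hxS))
  filter_upwards [eventually_exists_latticePt_mem hx.1 hU, eventually_ne_atTop 0]
    with n ⟨k, hkn, hkV, hkS⟩ hn
  calc exp (n * (log 2 + S - ε)) / (n + 1)
      ≤ exp (n * (log 2 + bahH β p (latticePt n k))) / (n + 1) := by
        gcongr
        linarith [hkS.out]
    _ ≤ levelTerm β p n k := exp_div_le_levelTerm β p hn hkn
    _ ≤ levelSum β p n V :=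
        Finset.single_le_sum (fun _ _ => by unfold levelTerm; positivity)
          (Finset.mem_filter.2 ⟨Finset.mem_range.2 (Nat.lt_succ_of_le hkn), hkV⟩)

lemma eventually_levelSum_pos (hV : IsOpen V) (hne : (Icc (-1 : ℝ) 1 ∩ V).Nonempty) :
    ∀ᶠ n : ℕ in atTop, 0 < levelSum β p n V :=
  (eventually_exp_div_le_levelSum β p hV hne one_pos).mono fun _ h =>
    (div_pos (exp_pos _) (by positivity)).trans_le h

lemma tendsto_log_levelSum_div (hV : IsOpen V) (hne : (Icc (-1 : ℝ) 1 ∩ V).Nonempty) :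
    Tendsto (fun n => log (levelSum β p n V) / n) atTop
      (𝓝 (log 2 + sSup (bahH β p '' (Icc (-1) 1 ∩ V)))) :=
  tendsto_log_div_of_exp_bounds ((eventually_ne_atTop 0).mono fun _ hn => levelSum_le β p hn)
    fun _ hε => eventually_exp_div_le_levelSum β p hV hne hε

theorem tendsto_log_cwProb_div (hV : IsOpen V) (hne : (Icc (-1 : ℝ) 1 ∩ V).Nonempty) :
    Tendsto (fun n => log (cwProb β p n {σ | mag σ ∈ V}) / n) atTop
      (𝓝 (sSup (bahH β p '' (Icc (-1) 1 ∩ V)) - sSup (bahH β p '' Icc (-1) 1))) := by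
  have hne_univ : (Icc (-1 : ℝ) 1 ∩ univ).Nonempty := ⟨0, by norm_num, mem_univ _⟩
  have hnum := tendsto_log_levelSum_div β p hV hne
  have hden := tendsto_log_levelSum_div β p isOpen_univ hne_univ
  rw [inter_univ] at hden
  rw [← add_sub_add_left_eq_sub _ _ (log 2)]
  refine (hnum.sub hden).congr' ?_
  filter_upwards [eventually_ne_atTop 0, eventually_levelSum_pos β p hV hne,
    eventually_levelSum_pos β p isOpen_univ hne_univ] with n hn hV_pos huniv_pos
  rw [cwProb_eq_levelSum_div β p hn, log_div hV_pos.ne' huniv_pos.ne', sub_div]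

end Laplace

/-- For `p ≥ 2` and `β > β₀ > β*(p)`, under the `p`-tensor Curie–Weiss model `P_{β₀,p}`,
the MPL estimator `η_p(X̄_n)` satisfies
`(1/n) log P_{β₀,p}(η_p(X̄_n) > β) → sup_{x ∈ η_p⁻¹((β,∞))} H_{β₀,p}(x) − sup_{[−1,1]} H_{β₀,p}`. -/
theorem statement15 (p : ℕ) (hp : 2 ≤ p) (β β₀ : ℝ) (h0 : betaStar p < β₀) (h1 : β₀ < β) :
    Tendsto (fun n : ℕ =>
        (1 / (n : ℝ)) * Real.log (cwProb β₀ p n {σ : Fin n → Bool | β < etaFn p (mag σ)}))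
      atTop
      (nhds (sSup (bahH β₀ p '' {t ∈ Set.Icc (-1 : ℝ) 1 | β < etaFn p t})
        - sSup (bahH β₀ p '' Set.Icc (-1 : ℝ) 1))) := by
  have hβ : 0 ≤ β := (betaStar_nonneg p).trans (h0.trans h1).le
  obtain ⟨t, ht, hηt⟩ := exists_lt_etaFn (p := p) (by omega) β
  exact (tendsto_log_cwProb_div β₀ p (isOpen_setOf_lt_etaFn p hβ) ⟨t, ht, hηt⟩).congr
    fun n => (one_div_mul_eq_div _ _).symm
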